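/- Let S be a k-element singular subset of Π_n (1 ≤ k ≤ n−1). The big star [S⟩, consisting of all (k+1)-element singular subsets of Π_n containing S, together with the induced lines, is isomorphic to the thin polar space Π_{n−k}: explicitly, the map i ↦ S ∪ {i} is a bijection from the points of J collinear with all points of S and not in S onto [S⟩, and this set of points with the inherited collinearity is isomorphic to Π_{n−k}. -/

import Mathlib

open Finset

/-- The point set J = {±1, …, ±n} of the thin polar space Π_n. -/
noncomputable def polarJ (n : ℕ) : Finset ℤ := (Finset.Icc (-(n : ℤ)) (n : ℤ)).erase 0

/-- A subset of J is singular iff it contains no pair {i, -i}. -/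
def Sing (n : ℕ) (S : Finset ℤ) : Prop := S ⊆ polarJ n ∧ ∀ i ∈ S, -i ∉ S

/-!
Adding a point `i ∉ S` to a singular set keeps it singular exactly when `i ∈ J` and `-i ∉ S`; a
singular `X ⊇ S` with one more element is `insert i S` for its unique new point `i`.
The residue `J \ (S ∪ -S)` is closed under negation, avoids `0` and has `2 (n - k)` elements,
like `J` of `Π_{n-k}`. Two such sets are matched by `±p ↦ ±f p` for any bijection `f` of their
positive parts, and this matching preserves the relation `b = -a`, i.e. non-collinearity.
-/

namespace Finset

theorem bijOn_insert {α : Type*} [DecidableEq α] {S : Finset α} {p : α → Prop}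
    {q : Finset α → Prop} (hp : ∀ i, p i → i ∉ S) (hq : ∀ i ∉ S, q (insert i S) ↔ p i) :
    Set.BijOn (insert · S) {i | p i} {X | q X ∧ #X = #S + 1 ∧ S ⊆ X} := by
  refine ⟨fun i hi => ?_, fun i hi j _ hij => (insert_inj (hp i hi)).1 hij, ?_⟩
  · exact ⟨(hq i (hp i hi)).2 hi, card_insert_of_notMem (hp i hi), subset_insert i S⟩
  · rintro X ⟨hX, hcard, hSX⟩
    obtain ⟨i, hi, rfl⟩ := exists_eq_insert_iff.2 ⟨hSX, hcard.symm⟩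
    exact ⟨i, (hq i hi).1 hX, rfl⟩

variable {α : Type*} [AddCommGroup α] [LinearOrder α] {s t : Finset α}

theorem abs_mem_of_neg_mem (hs : ∀ i ∈ s, -i ∈ s) {a : α} (ha : a ∈ s) : |a| ∈ s := by
  rcases abs_choice a with h | h <;> rw [h]
  exacts [ha, hs a ha]

variable [IsOrderedAddMonoid α]

def absSignEquiv (hs : ∀ i ∈ s, -i ∈ s) (hs0 : 0 ∉ s) : s ≃ {i ∈ s | 0 < i} × Bool where
  toFun a := (⟨|a.1|, mem_filter.2 ⟨abs_mem_of_neg_mem hs a.2, abs_pos.2 fun h => hs0 (h ▸ a.2)⟩⟩,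
    decide (0 < a.1))
  invFun p := ⟨if p.2 then p.1 else -p.1, by
    have hp := (mem_filter.1 p.1.2).1
    split_ifs
    exacts [hp, hs _ hp]⟩
  left_inv a := by
    by_cases h : 0 < a.1
    · ext; simp [h, abs_of_pos h]
    · ext; simp [h, abs_of_nonpos (not_lt.1 h)]
  right_inv := by
    rintro ⟨⟨x, hx⟩, b⟩
    have hx0 : 0 < x := (mem_filter.1 hx).2
    cases b
    · ext <;> simp [hx0.le, abs_of_pos hx0]
    · ext <;> simp [hx0, abs_of_pos hx0]

theorem absSignEquiv_neg (hs : ∀ i ∈ s, -i ∈ s) (hs0 : 0 ∉ s) (a : s) :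
    absSignEquiv hs hs0 ⟨-a, hs a a.2⟩ =
      ((absSignEquiv hs hs0 a).1, !(absSignEquiv hs hs0 a).2) := by
  have ha : (a : α) ≠ 0 := fun h => hs0 (h ▸ a.2)
  ext
  · simp [absSignEquiv]
  · rcases ha.lt_or_gt with h | h <;> simp [absSignEquiv, h, h.not_gt]

theorem absSignEquiv_symm_not (hs : ∀ i ∈ s, -i ∈ s) (hs0 : 0 ∉ s)
    (p : {i ∈ s | 0 < i}) (b : Bool) :
    ((absSignEquiv hs hs0).symm (p, !b) : α) = -(absSignEquiv hs hs0).symm (p, b) := by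
  cases b <;> simp [absSignEquiv]

theorem card_eq_two_mul_card_filter_pos (hs : ∀ i ∈ s, -i ∈ s) (hs0 : 0 ∉ s) :
    #s = 2 * #{i ∈ s | 0 < i} := by
  simpa [mul_comm] using Fintype.card_congr (absSignEquiv hs hs0)

theorem exists_equiv_neg_iff (hs : ∀ i ∈ s, -i ∈ s) (hs0 : 0 ∉ s) (ht : ∀ i ∈ t, -i ∈ t)
    (ht0 : 0 ∉ t) (hst : #s = #t) :
    ∃ e : s ≃ t, ∀ a b : s, (b : α) = -a ↔ (e b : α) = -(e a) := by
  have hpos : #{i ∈ s | 0 < i} = #{i ∈ t | 0 < i} := by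
    rw [card_eq_two_mul_card_filter_pos hs hs0, card_eq_two_mul_card_filter_pos ht ht0] at hst
    omega
  set e := (absSignEquiv hs hs0).trans
    (((equivOfCardEq hpos).prodCongr (Equiv.refl Bool)).trans (absSignEquiv ht ht0).symm)
  have he : ∀ a : s, (e ⟨-a, hs a a.2⟩ : α) = -(e a) := fun a => by
    simp only [e, Equiv.trans_apply, absSignEquiv_neg, Equiv.prodCongr_apply]
    exact absSignEquiv_symm_not ht ht0 _ _
  refine ⟨e, fun a b => ?_⟩
  rw [← he, ← Subtype.ext_iff, e.apply_eq_iff_eq, Subtype.ext_iff]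

end Finset

open scoped Pointwise

section PolarSpace

variable {n : ℕ} {S : Finset ℤ} {i : ℤ}

theorem mem_polarJ : i ∈ polarJ n ↔ i ≠ 0 ∧ -(n : ℤ) ≤ i ∧ i ≤ n := by
  simp [polarJ]

theorem neg_mem_polarJ (h : i ∈ polarJ n) : -i ∈ polarJ n := by
  rw [mem_polarJ] at *; omega

theorem zero_notMem_polarJ (n : ℕ) : (0 : ℤ) ∉ polarJ n := by
  simp [polarJ]

theorem card_polarJ (n : ℕ) : #(polarJ n) = 2 * n := by
  rw [polarJ, card_erase_of_mem (by simp), Int.card_Icc]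
  omega

theorem Sing.insert_iff (hS : Sing n S) : Sing n (insert i S) ↔ i ∈ polarJ n ∧ -i ∉ S := by
  refine ⟨fun h => ⟨h.1 (mem_insert_self i S),
    fun hi => h.2 i (mem_insert_self i S) (mem_insert_of_mem hi)⟩, ?_⟩
  rintro ⟨hiJ, hi⟩
  refine ⟨insert_subset hiJ hS.1, ?_⟩
  simp only [mem_insert, forall_eq_or_imp, not_or]
  have hi0 := (mem_polarJ.1 hiJ).1
  refine ⟨⟨by omega, hi⟩, fun j hj => ⟨?_, hS.2 j hj⟩⟩
  rintro rfl
  exact hi (by simpa using hj)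

/-- The points of Π_n outside `S` collinear with every point of `S`. -/
noncomputable def residue (n : ℕ) (S : Finset ℤ) : Finset ℤ := polarJ n \ (S ∪ -S)

theorem mem_residue : i ∈ residue n S ↔ i ∈ polarJ n ∧ i ∉ S ∧ -i ∉ S := by
  simp [residue, mem_neg']

theorem neg_mem_residue (h : i ∈ residue n S) : -i ∈ residue n S := by
  rw [mem_residue] at *
  exact ⟨neg_mem_polarJ h.1, h.2.2, by simpa using h.2.1⟩

theorem zero_notMem_residue : (0 : ℤ) ∉ residue n S :=
  fun h => zero_notMem_polarJ n (mem_residue.1 h).1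

theorem Sing.card_residue (hS : Sing n S) : #(residue n S) = 2 * (n - #S) := by
  have hdisj : Disjoint S (-S) := disjoint_left.2 fun x hx hx' => hS.2 x hx (mem_neg'.1 hx')
  have hsub : S ∪ -S ⊆ polarJ n :=
    union_subset hS.1 fun x hx => by simpa using neg_mem_polarJ (hS.1 (mem_neg'.1 hx))
  rw [residue, card_sdiff_of_subset hsub, card_union_of_disjoint hdisj, card_neg, card_polarJ]
  omega

end PolarSpace

theorem stmt15_general (n k : ℕ) (S : Finset ℤ) (hS : Sing n S) (hSc : S.card = k) :
    Set.BijOn (fun i => insert i S)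
      {i : ℤ | i ∈ polarJ n ∧ i ∉ S ∧ -i ∉ S}
      {X : Finset ℤ | Sing n X ∧ X.card = k + 1 ∧ S ⊆ X} ∧
    ∃ e : {i : ℤ // i ∈ polarJ n ∧ i ∉ S ∧ -i ∉ S} ≃ {j : ℤ // j ∈ polarJ (n - k)},
      ∀ a b : {i : ℤ // i ∈ polarJ n ∧ i ∉ S ∧ -i ∉ S},
        (b.1 = -a.1 ↔ (e b).1 = -(e a).1) := by
  subst hSc
  refine ⟨bijOn_insert (fun i hi => hi.2.1) fun i hi => ?_, ?_⟩
  · rw [hS.insert_iff]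
    tauto
  · obtain ⟨e, he⟩ := exists_equiv_neg_iff (fun _ => neg_mem_residue) zero_notMem_residue
      (fun _ => neg_mem_polarJ) (zero_notMem_polarJ _) (by rw [hS.card_residue, card_polarJ])
    exact ⟨(Equiv.subtypeEquivRight fun _ => mem_residue.symm).trans e, fun a b =>
      he ⟨a, mem_residue.2 a.2⟩ ⟨b, mem_residue.2 b.2⟩⟩

/-- The big star of a k-element singular subset S of Π_n (1 ≤ k ≤ n-1) is isomorphic to
the thin polar space Π_{n-k}: the map i ↦ S ∪ {i} is a bijection from the set of points
collinear with all of S and not in S onto the big star, and this point set with the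
inherited collinearity is isomorphic to Π_{n-k}. -/
theorem stmt15 (n k : ℕ) (hk1 : 1 ≤ k) (hk2 : k ≤ n - 1)
    (S : Finset ℤ) (hS : Sing n S) (hSc : S.card = k) :
    Set.BijOn (fun i => insert i S)
      {i : ℤ | i ∈ polarJ n ∧ i ∉ S ∧ -i ∉ S}
      {X : Finset ℤ | Sing n X ∧ X.card = k + 1 ∧ S ⊆ X} ∧
    ∃ e : {i : ℤ // i ∈ polarJ n ∧ i ∉ S ∧ -i ∉ S} ≃ {j : ℤ // j ∈ polarJ (n - k)},
      ∀ a b : {i : ℤ // i ∈ polarJ n ∧ i ∉ S ∧ -i ∉ S},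
        (b.1 = -a.1 ↔ (e b).1 = -(e a).1) :=
  stmt15_general n k S hS hSc
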